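/- (Conic structure for families on the sphere.) Let n ≥ 2 and let X_1, …, X_k with k ≥ 2 be pairwise disjoint nonempty closed subsets of the unit sphere sphere(0,1) ⊆ ℝⁿ. Then the conflict set is a cone with vertex the origin: Conf(X) = { t • w : t ≥ 0, w ∈ Conf(X) ∩ sphere(0,1) }. In particular 0 ∈ Conf(X), and for every t > 0 and x ∈ ℝⁿ one has t • x ∈ Conf(X) if and only if x ∈ Conf(X). -/

import Mathlib

/-! For `p` on the unit sphere, `‖t • x - p‖² = t ‖x - p‖² + c(t, x)` with `c` independent of `p`.
Hence for `t > 0` the distances from `t • x` to subsets of the sphere are ordered as those from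
`x`, so territories and the conflict set are invariant under positive scaling, while at `t = 0`
the origin is at distance `1` from every set and so lies in all territories. A conflict point on
the sphere exists because for `n ≥ 2` the sphere is connected and covered by finitely many closed
territories, each meeting it. -/

open Metric Set

/-- The territory of the set `X i` within the collection `X`. -/
def Ter {n k : ℕ} (X : Fin k → Set (EuclideanSpace ℝ (Fin n))) (i : Fin k) :
    Set (EuclideanSpace ℝ (Fin n)) :=
  {x | ∀ j, Metric.infDist x (X i) ≤ Metric.infDist x (X j)}

/-- The conflict set of the collection `X`. -/
def Conf {n k : ℕ} (X : Fin k → Set (EuclideanSpace ℝ (Fin n))) :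
    Set (EuclideanSpace ℝ (Fin n)) :=
  {x | ∃ i j, i ≠ j ∧ x ∈ Ter X i ∧ x ∈ Ter X j}

section Sphere

variable {E : Type*} [NormedAddCommGroup E] [InnerProductSpace ℝ E]

lemma dist_smul_sq_of_mem_sphere {p : E} (hp : p ∈ sphere (0 : E) 1) (t : ℝ) (x : E) :
    dist (t • x) p ^ 2 = t * dist x p ^ 2 + ((t ^ 2 - t) * ‖x‖ ^ 2 + (1 - t)) := by
  rw [mem_sphere_zero_iff_norm] at hp
  rw [dist_eq_norm, dist_eq_norm, norm_sub_sq_real, norm_sub_sq_real, norm_smul,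
    real_inner_smul_left, hp, Real.norm_eq_abs, mul_pow, sq_abs]
  ring

variable [FiniteDimensional ℝ E]

lemma infDist_smul_sq_of_subset_sphere {A : Set E} (hA : A ⊆ sphere (0 : E) 1)
    (hne : A.Nonempty) {t : ℝ} (ht : 0 ≤ t) (x : E) :
    infDist (t • x) A ^ 2 = t * infDist x A ^ 2 + ((t ^ 2 - t) * ‖x‖ ^ 2 + (1 - t)) := by
  have hcl : closure A ⊆ sphere (0 : E) 1 := closure_minimal hA isClosed_sphere
  obtain ⟨p, hpA, hp⟩ := exists_mem_closure_infDist_eq_dist hne x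
  obtain ⟨q, hqA, hq⟩ := exists_mem_closure_infDist_eq_dist hne (t • x)
  have hxq : infDist x A ≤ dist x q := infDist_closure (x := x) ▸ infDist_le_dist_of_mem hqA
  have htxp : infDist (t • x) A ≤ dist (t • x) p :=
    infDist_closure (x := t • x) ▸ infDist_le_dist_of_mem hpA
  apply le_antisymm
  · calc infDist (t • x) A ^ 2 ≤ dist (t • x) p ^ 2 := by gcongr; exact infDist_nonneg
      _ = _ := by rw [dist_smul_sq_of_mem_sphere (hcl hpA), hp]
  · calc t * infDist x A ^ 2 + ((t ^ 2 - t) * ‖x‖ ^ 2 + (1 - t))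
        ≤ t * dist x q ^ 2 + ((t ^ 2 - t) * ‖x‖ ^ 2 + (1 - t)) := by
          gcongr; exact infDist_nonneg
      _ = infDist (t • x) A ^ 2 := by rw [← dist_smul_sq_of_mem_sphere (hcl hqA), hq]

lemma infDist_zero_of_subset_sphere {A : Set E} (hA : A ⊆ sphere (0 : E) 1)
    (hne : A.Nonempty) : infDist 0 A = 1 := by
  have h := infDist_smul_sq_of_subset_sphere hA hne le_rfl (0 : E)
  rw [zero_smul] at h
  exact (pow_eq_one_iff_of_nonneg infDist_nonneg two_ne_zero).mp (by rw [h]; ring)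

end Sphere

lemma IsPreconnected.exists_mem_two_of_isClosed_cover {X ι : Type*} [TopologicalSpace X]
    [Finite ι] {S : Set X} (hS : IsPreconnected S) {T : ι → Set X}
    (hT : ∀ i, IsClosed (T i)) (hcover : S ⊆ ⋃ i, T i) {i₀ i₁ : ι} (hi : i₀ ≠ i₁)
    (h₀ : (S ∩ T i₀).Nonempty) (h₁ : (S ∩ T i₁).Nonempty) :
    ∃ x ∈ S, ∃ i j, i ≠ j ∧ x ∈ T i ∧ x ∈ T j := by
  have hrest : IsClosed (⋃ i ∈ {i | i ≠ i₀}, T i) :=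
    (toFinite _).isClosed_biUnion fun i _ => hT i
  have hsplit : S ⊆ T i₀ ∪ ⋃ i ∈ {i | i ≠ i₀}, T i := by
    intro x hx
    obtain ⟨i, hi⟩ := mem_iUnion.mp (hcover hx)
    by_cases h : i = i₀
    · exact Or.inl (h ▸ hi)
    · exact Or.inr (mem_biUnion h hi)
  have h₁' : (S ∩ ⋃ i ∈ {i | i ≠ i₀}, T i).Nonempty :=
    h₁.mono (inter_subset_inter_right S (subset_biUnion_of_mem (u := T) hi.symm))
  obtain ⟨x, hxS, hx₀, hx⟩ :=
    isPreconnected_closed_iff.mp hS _ _ (hT i₀) hrest hsplit h₀ h₁'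
  obtain ⟨i, hi, hxi⟩ := mem_iUnion₂.mp hx
  exact ⟨x, hxS, i₀, i, Ne.symm hi, hx₀, hxi⟩

lemma eq_cone_of_smul_mem_iff {E : Type*} [NormedAddCommGroup E] [NormedSpace ℝ E]
    {C : Set E} (hsmul : ∀ t : ℝ, 0 < t → ∀ x, t • x ∈ C ↔ x ∈ C) (h0 : (0 : E) ∈ C)
    (hsphere : (C ∩ sphere (0 : E) 1).Nonempty) :
    C = {y | ∃ t : ℝ, 0 ≤ t ∧ ∃ w ∈ C ∩ sphere (0 : E) 1, y = t • w} := by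
  ext y
  constructor
  · intro hy
    rcases eq_or_ne y 0 with rfl | hy0
    · obtain ⟨w, hw⟩ := hsphere
      exact ⟨0, le_rfl, w, hw, (zero_smul ℝ w).symm⟩
    · have hny : 0 < ‖y‖ := norm_pos_iff.mpr hy0
      refine ⟨‖y‖, hny.le, ‖y‖⁻¹ • y, ⟨(hsmul _ (inv_pos.mpr hny) y).mpr hy, ?_⟩, ?_⟩
      · rw [mem_sphere_zero_iff_norm, norm_smul, norm_inv, norm_norm, inv_mul_cancel₀ hny.ne']
      · rw [smul_smul, mul_inv_cancel₀ hny.ne', one_smul]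
  · rintro ⟨t, ht, w, ⟨hw, -⟩, rfl⟩
    rcases ht.eq_or_lt with rfl | htpos
    · rwa [zero_smul]
    · exact (hsmul t htpos w).mpr hw

section Territory

variable {n k : ℕ} {X : Fin k → Set (EuclideanSpace ℝ (Fin n))}

lemma isClosed_ter (i : Fin k) : IsClosed (Ter X i) := by
  simp only [Ter, ofPred_forall]
  exact isClosed_iInter fun j =>
    isClosed_le (continuous_infDist_pt (X i)) (continuous_infDist_pt (X j))

lemma exists_mem_ter [NeZero k] (x : EuclideanSpace ℝ (Fin n)) : ∃ i, x ∈ Ter X i :=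
  Finite.exists_min fun i => infDist x (X i)

lemma mem_ter_of_mem {i : Fin k} {x : EuclideanSpace ℝ (Fin n)} (hx : x ∈ X i) :
    x ∈ Ter X i := fun j => by
  rw [infDist_zero_of_mem hx]
  exact infDist_nonneg

variable (hsub : ∀ i, X i ⊆ sphere (0 : EuclideanSpace ℝ (Fin n)) 1) (hne : ∀ i, (X i).Nonempty)
include hsub hne

lemma zero_mem_ter (i : Fin k) : (0 : EuclideanSpace ℝ (Fin n)) ∈ Ter X i := fun j => by
  rw [infDist_zero_of_subset_sphere (hsub i) (hne i),
    infDist_zero_of_subset_sphere (hsub j) (hne j)]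

lemma smul_mem_ter_iff {t : ℝ} (ht : 0 < t) (x : EuclideanSpace ℝ (Fin n)) (i : Fin k) :
    t • x ∈ Ter X i ↔ x ∈ Ter X i := by
  refine forall_congr' fun j => ?_
  rw [← pow_le_pow_iff_left₀ infDist_nonneg infDist_nonneg two_ne_zero,
    ← pow_le_pow_iff_left₀ (infDist_nonneg (x := x)) infDist_nonneg two_ne_zero,
    infDist_smul_sq_of_subset_sphere (hsub i) (hne i) ht.le,
    infDist_smul_sq_of_subset_sphere (hsub j) (hne j) ht.le, add_le_add_iff_right, mul_le_mul_iff_of_pos_left ht]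

lemma smul_mem_conf_iff {t : ℝ} (ht : 0 < t) (x : EuclideanSpace ℝ (Fin n)) :
    t • x ∈ Conf X ↔ x ∈ Conf X := by
  simp only [Conf, mem_ofPred_eq, smul_mem_ter_iff hsub hne ht]

lemma zero_mem_conf (hk : 2 ≤ k) : (0 : EuclideanSpace ℝ (Fin n)) ∈ Conf X := by
  have : Nontrivial (Fin k) := Fin.nontrivial_iff_two_le.mpr hk
  obtain ⟨i, j, hij⟩ := exists_pair_ne (Fin k)
  exact ⟨i, j, hij, zero_mem_ter hsub hne i, zero_mem_ter hsub hne j⟩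

lemma conf_inter_sphere_nonempty (hn : 2 ≤ n) (hk : 2 ≤ k) :
    (Conf X ∩ sphere (0 : EuclideanSpace ℝ (Fin n)) 1).Nonempty := by
  have : NeZero k := ⟨by omega⟩
  have hrank : 1 < Module.rank ℝ (EuclideanSpace ℝ (Fin n)) := by
    rw [← Module.finrank_eq_rank, finrank_euclideanSpace_fin]
    exact_mod_cast hn
  have hconn := isConnected_sphere hrank (0 : EuclideanSpace ℝ (Fin n)) zero_le_one
  have : Nontrivial (Fin k) := Fin.nontrivial_iff_two_le.mpr hk
  obtain ⟨i₀, i₁, hi⟩ := exists_pair_ne (Fin k)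
  have hmeet (i : Fin k) : (sphere 0 1 ∩ Ter X i).Nonempty :=
    let ⟨p, hp⟩ := hne i
    ⟨p, hsub i hp, mem_ter_of_mem hp⟩
  obtain ⟨x, hx, i, j, hij, hxi, hxj⟩ :=
    hconn.isPreconnected.exists_mem_two_of_isClosed_cover isClosed_ter
      (fun x _ => mem_iUnion.mpr (exists_mem_ter x)) hi (hmeet i₀) (hmeet i₁)
  exact ⟨x, ⟨i, j, hij, hxi, hxj⟩, hx⟩

end Territory

theorem conf_of_spherical_family_is_cone_general {n k : ℕ} (hn : 2 ≤ n) (hk : 2 ≤ k)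
    (X : Fin k → Set (EuclideanSpace ℝ (Fin n)))
    (hsub : ∀ i, X i ⊆ Metric.sphere (0 : EuclideanSpace ℝ (Fin n)) 1)
    (hne : ∀ i, (X i).Nonempty) :
    Conf X = {y | ∃ t : ℝ, 0 ≤ t ∧
        ∃ w ∈ Conf X ∩ Metric.sphere (0 : EuclideanSpace ℝ (Fin n)) 1, y = t • w} ∧
      (0 : EuclideanSpace ℝ (Fin n)) ∈ Conf X ∧
      ∀ t : ℝ, 0 < t → ∀ x : EuclideanSpace ℝ (Fin n), (t • x ∈ Conf X ↔ x ∈ Conf X) := by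
  have hsmul : ∀ t : ℝ, 0 < t → ∀ x, t • x ∈ Conf X ↔ x ∈ Conf X :=
    fun t ht x => smul_mem_conf_iff hsub hne ht x
  have h0 := zero_mem_conf hsub hne hk
  exact ⟨eq_cone_of_smul_mem_iff hsmul h0 (conf_inter_sphere_nonempty hsub hne hn hk), h0, hsmul⟩

/-- Conic structure: the conflict set of a family of disjoint closed subsets of the
unit sphere is the cone over its trace on the sphere, with vertex the origin. -/
theorem conf_of_spherical_family_is_cone {n k : ℕ} (hn : 2 ≤ n) (hk : 2 ≤ k)
    (X : Fin k → Set (EuclideanSpace ℝ (Fin n)))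
    (hsub : ∀ i, X i ⊆ Metric.sphere (0 : EuclideanSpace ℝ (Fin n)) 1)
    (hdisj : ∀ i j, i ≠ j → Disjoint (X i) (X j))
    (hne : ∀ i, (X i).Nonempty)
    (hcl : ∀ i, IsClosed (X i)) :
    Conf X = {y | ∃ t : ℝ, 0 ≤ t ∧
        ∃ w ∈ Conf X ∩ Metric.sphere (0 : EuclideanSpace ℝ (Fin n)) 1, y = t • w} ∧
      (0 : EuclideanSpace ℝ (Fin n)) ∈ Conf X ∧
      ∀ t : ℝ, 0 < t → ∀ x : EuclideanSpace ℝ (Fin n), (t • x ∈ Conf X ↔ x ∈ Conf X) :=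
  conf_of_spherical_family_is_cone_general hn hk X hsub hne
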